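/- Consider the discrete-time LTI system x_{k+1} = A x_k + B u_k + w_k over horizon T with stacked disturbance w = (x₀, w₀, …, w_{T−1}). If block matrices Φ_x, Φ_u satisfy the SLS achievability constraints Φ_x[0] = [I 0 ⋯ 0] and Φ_x[k+1] = AΦ_x[k] + BΦ_u[k] for k = 0,…,T−1, then for any control sequence satisfying u = Φ_u w, the resulting state trajectory satisfies x = Φ_x w, i.e., x_k = Φ_x[k] w for all k = 0,…,T. -/

import Mathlib

/-- The selector matrix extracting block `k` of the stacked disturbance vector
`w = (x₀, w₀, …, w_{T-1})`. -/
def selector {nx T : ℕ} (k : Fin (T + 1)) : Matrix (Fin nx) (Fin (T + 1) × Fin nx) ℝ :=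
  Matrix.of fun i p => if p.1 = k ∧ p.2 = i then 1 else 0

/-- The stacked disturbance vector `w = (x₀ᵀ, w₀ᵀ, …, w_{T-1}ᵀ)ᵀ ∈ ℝ^{(T+1)n_x}`. -/
def stacked {nx T : ℕ} (x0 : Fin nx → ℝ) (d : Fin T → Fin nx → ℝ) :
    Fin (T + 1) × Fin nx → ℝ :=
  fun p => Fin.cases (x0 p.2) (fun j => d j p.2) p.1

theorem selector_mulVec {nx T : ℕ} (k : Fin (T + 1)) (w : Fin (T + 1) × Fin nx → ℝ) :
    (selector k).mulVec w = fun i => w (k, i) := by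
  funext i
  have hsel : ∀ p : Fin (T + 1) × Fin nx, (p.1 = k ∧ p.2 = i) ↔ p = (k, i) :=
    fun p => (Prod.ext_iff (x := p) (y := (k, i))).symm
  simp [Matrix.mulVec, dotProduct, selector, hsel]

theorem selector_zero_mulVec_stacked {nx T : ℕ} (x0 : Fin nx → ℝ) (d : Fin T → Fin nx → ℝ) :
    (selector 0).mulVec (stacked x0 d) = x0 := by
  rw [selector_mulVec]
  rfl

theorem selector_succ_mulVec_stacked {nx T : ℕ} (x0 : Fin nx → ℝ) (d : Fin T → Fin nx → ℝ)
    (k : Fin T) : (selector k.succ).mulVec (stacked x0 d) = d k := by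
  rw [selector_mulVec]
  rfl

/-- Finite-horizon SLS achievability (one direction): if the block responses `Φx, Φu`
satisfy the achievability constraints `Φx[0] = [I 0 ⋯ 0]` and
`Φx[k+1] = A Φx[k] + B Φu[k] + E_{k+1}` (the block-row form of `F_x Φ_x + F_u Φ_u = I`),
then for any rollout of the system `x_{k+1} = A x_k + B u_k + w_k` with control
`u_k = Φu[k] w`, the state satisfies `x_k = Φx[k] w` for all `k = 0, …, T`. -/
theorem sls_achievability
    {nx nu T : ℕ}
    (A : Matrix (Fin nx) (Fin nx) ℝ) (B : Matrix (Fin nx) (Fin nu) ℝ)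
    (Phix : Fin (T + 1) → Matrix (Fin nx) (Fin (T + 1) × Fin nx) ℝ)
    (Phiu : Fin T → Matrix (Fin nu) (Fin (T + 1) × Fin nx) ℝ)
    (hPhi0 : Phix 0 = selector 0)
    (hrec : ∀ k : Fin T,
      Phix k.succ = A * Phix k.castSucc + B * Phiu k + selector k.succ)
    (x : Fin (T + 1) → Fin nx → ℝ) (u : Fin T → Fin nu → ℝ)
    (d : Fin T → Fin nx → ℝ)
    (hdyn : ∀ k : Fin T,
      x k.succ = A.mulVec (x k.castSucc) + B.mulVec (u k) + d k)
    (hu : ∀ k : Fin T, u k = (Phiu k).mulVec (stacked (x 0) d)) :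
    ∀ k : Fin (T + 1), x k = (Phix k).mulVec (stacked (x 0) d) := by
  intro k
  induction k using Fin.induction with
  | zero => rw [hPhi0, selector_zero_mulVec_stacked]
  | succ k ih =>
    rw [hdyn k, hu k, hrec k, Matrix.add_mulVec, Matrix.add_mulVec, ← Matrix.mulVec_mulVec,
      ← Matrix.mulVec_mulVec, ← ih, selector_succ_mulVec_stacked]
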